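/- arXiv:1901.05732 — 2 statements merged into one kernel-verified Lean document; each statement's English description precedes it below -/
import Mathlib

section
/- (Decodability, leaders.) Assume r ∈ {1, 2, N−1, N}, or t ∈ {1, 2, K−1, K}, or all entries of d are pairwise distinct. Then for every leader k and every step j ∈ {1,...,min(N−r+1, K−t, N_e(d))}, at the end of step j of the proposed interference-alignment scheme user k can decode by direct decoding every block W_S with |S| = r, d_k ∈ S and S ∩ {d_{u_1},...,d_{u_j}} ≠ ∅, and every sub-block W_{S_1,V_1} with |S_1| = r, d_k ∈ S_1 and V_1 ∩ {u_1,...,u_j} ≠ ∅. -/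
open Finset

/-- The ambient GF(2)-vector space with basis indexed by sub-block labels `(S, V)`:
`S` is the block index (a set of files) and `V` the set of users caching the sub-block. -/
abbrev Vec (N K : ℕ) := Finset (Fin N) × Finset (Fin K) → ZMod 2

/-- The basis vector corresponding to the sub-block `W_{S,V}`. -/
def subBlk (N K : ℕ) (S : Finset (Fin N)) (V : Finset (Fin K)) : Vec N K :=
  Pi.single (S, V) 1

/-- Number of distinct entries `N_e(d)` of a demand vector. -/
def numDistinct {N K : ℕ} (d : Fin K → Fin N) : ℕ := (Finset.univ.image d).card

/-- The demands `{d_{u_1},…,d_{u_j}}` of the first `j` leaders. -/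
def leaderDems {N K : ℕ} (d : Fin K → Fin N) (u : ℕ → Fin K) (j : ℕ) : Finset (Fin N) :=
  (Finset.Icc 1 j).image (fun i => d (u i))

/-- The group `G^j_{J,B}` of blocks: blocks `S` of size `r` intersecting the demands of `J`,
containing at most one of the first `j` leader demands (i.e. containing no 2-subset of
them), and with `S \ d(J) = B`. -/
def groupG {N K : ℕ} (d : Fin K → Fin N) (u : ℕ → Fin K) (r j : ℕ)
    (J : Finset (Fin K)) (B : Finset (Fin N)) : Finset (Finset (Fin N)) :=
  (Finset.powersetCard r (Finset.univ : Finset (Fin N))).filter (fun S =>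
    (S ∩ J.image d).Nonempty ∧ (S ∩ leaderDems d u j).card ≤ 1 ∧ S \ J.image d = B)

/-- The multicast term `⊕_{k∈J : d_k∈S} W_{S,J\{k}}` of a block `S` for the user set `J`. -/
def blkTerm {N K : ℕ} (d : Fin K → Fin N) (J : Finset (Fin K)) (S : Finset (Fin N)) : Vec N K :=
  ∑ k ∈ J.filter (fun k => d k ∈ S), subBlk N K S (J.erase k)

/-- The transmitted linear combination of the group `G^j_{J,B}` whose pilot block
(one of the first `n^j_{J,B}` blocks, demanded by the leader `u_j`) is `P`: the `p`-th
coordinate of the vector of linear combinations in the scheme, where `S_p = P`. -/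
def comb {N K : ℕ} (d : Fin K → Fin N) (u : ℕ → Fin K) (r j : ℕ)
    (J : Finset (Fin K)) (B : Finset (Fin N)) (P : Finset (Fin N)) : Vec N K :=
  blkTerm d J P +
    ∑ S ∈ (groupG d u r j J B).filter (fun S => d (u j) ∉ S ∧ (S ∩ P).card = r - 1),
      blkTerm d J S

/-- `Sum(G^j_{J,B})`: the XOR of all linear combinations transmitted for the group
`G^j_{J,B}` (one per block of the group demanded by the leader `u_j`). -/
def sumG {N K : ℕ} (d : Fin K → Fin N) (u : ℕ → Fin K) (r j : ℕ)
    (J : Finset (Fin K)) (B : Finset (Fin N)) : Vec N K :=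
  ∑ P ∈ (groupG d u r j J B).filter (fun S => d (u j) ∈ S), comb d u r j J B P

/-- The set of all linear combinations transmitted by the interference-alignment scheme
during steps `1,…,jmax`. -/
def transmitted {N K : ℕ} (d : Fin K → Fin N) (u : ℕ → Fin K) (r t jmax : ℕ) :
    Set (Vec N K) :=
  { v | ∃ j ∈ Finset.Icc 1 jmax, ∃ J : Finset (Fin K),
      J.card = t + 1 ∧ u j ∈ J ∧ (∀ i ∈ Finset.Icc 1 (j - 1), u i ∉ J) ∧
      ∃ B : Finset (Fin N), ∃ P ∈ groupG d u r j J B,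
        d (u j) ∈ P ∧ v = comb d u r j J B P }

/-- The sub-blocks cached by user `k` under the MAN placement with parameter `t`. -/
def cacheSet (N K r t : ℕ) (k : Fin K) : Set (Vec N K) :=
  { v | ∃ S : Finset (Fin N), ∃ V : Finset (Fin K),
      S.card = r ∧ V.card = t ∧ k ∈ V ∧ v = subBlk N K S V }

/-- A linear combination `c` contains no interference to a user demanding file `dk`,
relative to a set `Dec` of already known sub-blocks: every sub-block appearing in `c`
either belongs to the demanded file or is already known (hence cancellable). -/
def interfFree {N K : ℕ} (dk : Fin N) (Dec : Set (Vec N K)) (c : Vec N K) : Prop :=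
  ∀ S V, c (S, V) ≠ 0 → dk ∈ S ∨ subBlk N K S V ∈ Dec

/-- One round of direct decoding: add every sub-block lying in the span of the known
sub-blocks together with the interference-free transmitted combinations. -/
def ddStep {N K : ℕ} (dk : Fin N) (T : Set (Vec N K)) (Dec : Set (Vec N K)) :
    Set (Vec N K) :=
  Dec ∪ { v | (∃ S V, v = subBlk N K S V) ∧
    v ∈ Submodule.span (ZMod 2) (Dec ∪ { c ∈ T | interfFree dk Dec c }) }

/-- The set of sub-blocks that user `k` can obtain by direct decoding (treating
interference as noise) from its cache and the transmissions of steps `1,…,jmax`. -/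
def directDec {N K : ℕ} (d : Fin K → Fin N) (u : ℕ → Fin K) (r t : ℕ)
    (k : Fin K) (jmax : ℕ) : Set (Vec N K) :=
  ⋃ m : ℕ, (ddStep (d k) (transmitted d u r t jmax))^[m] (cacheSet N K r t k)

/-- The combination `C_{T,H}` from the interference-alignment analysis. -/
def Cth {N K : ℕ} (d : Fin K → Fin N) (r : ℕ) (T : Finset (Fin K)) (H : Finset (Fin N)) :
    Vec N K :=
  ∑ k1 ∈ T, ∑ S' ∈ (Finset.powersetCard r (T.image d ∪ H)).filter
      (fun S' => H ⊆ S' ∧ d k1 ∈ S'), subBlk N K S' (T.erase k1)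

section Stmt6Aux

variable {N K : ℕ}

lemma zmod2_eq_one {a : ZMod 2} (h : a ≠ 0) : a = 1 := by revert a; decide

lemma subBlk_apply_self (S : Finset (Fin N)) (V : Finset (Fin K)) :
    subBlk N K S V (S, V) = 1 := by simp [subBlk]

lemma subBlk_apply_ne {S : Finset (Fin N)} {V : Finset (Fin K)}
    {x : Finset (Fin N) × Finset (Fin K)} (h : x ≠ (S, V)) : subBlk N K S V x = 0 :=
  Pi.single_eq_of_ne h 1

lemma blkTerm_support {d : Fin K → Fin N} {J : Finset (Fin K)} {W S' : Finset (Fin N)}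
    {V' : Finset (Fin K)} (h : blkTerm d J W (S', V') ≠ 0) :
    S' = W ∧ ∃ k' ∈ J, d k' ∈ W ∧ V' = J.erase k' := by
  unfold blkTerm at h
  rw [Finset.sum_apply] at h
  obtain ⟨k', hk', hne⟩ := Finset.exists_ne_zero_of_sum_ne_zero h
  rw [Finset.mem_filter] at hk'
  have hx : (S', V') = (W, J.erase k') := by
    by_contra hc; exact hne (subBlk_apply_ne hc)
  rw [Prod.mk.injEq] at hx
  obtain ⟨h1, h2⟩ := hx
  subst h1; subst h2
  exact ⟨rfl, k', hk'.1, hk'.2, rfl⟩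

lemma blkTerm_apply_one {d : Fin K → Fin N} {J : Finset (Fin K)} {W : Finset (Fin N)}
    {k0 : Fin K} (hk0 : k0 ∈ J) (hd : d k0 ∈ W) :
    blkTerm d J W (W, J.erase k0) = 1 := by
  unfold blkTerm
  rw [Finset.sum_apply,
    Finset.sum_eq_single_of_mem k0 (Finset.mem_filter.2 ⟨hk0, hd⟩)]
  · exact subBlk_apply_self W (J.erase k0)
  · intro k' hk' hne
    apply subBlk_apply_ne
    simp only [ne_eq, Prod.mk.injEq, not_and]
    intro _ h2
    exact hne ((Finset.erase_inj J (Finset.mem_filter.1 hk').1).1 h2.symm)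

lemma mem_leaderDems {d : Fin K → Fin N} {u : ℕ → Fin K} {j : ℕ} {x : Fin N} :
    x ∈ leaderDems d u j ↔ ∃ i, 1 ≤ i ∧ i ≤ j ∧ d (u i) = x := by
  simp [leaderDems, Finset.mem_image, Finset.mem_Icc, and_assoc]

lemma mem_groupG {d : Fin K → Fin N} {u : ℕ → Fin K} {r j : ℕ} {J : Finset (Fin K)}
    {B S : Finset (Fin N)} :
    S ∈ groupG d u r j J B ↔ S.card = r ∧ (S ∩ J.image d).Nonempty ∧
      (S ∩ leaderDems d u j).card ≤ 1 ∧ S \ J.image d = B := by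
  unfold groupG
  rw [Finset.mem_filter, Finset.mem_powersetCard_univ]

lemma comb_support {d : Fin K → Fin N} {u : ℕ → Fin K} {r j : ℕ} {J : Finset (Fin K)}
    {B P S' : Finset (Fin N)} {V' : Finset (Fin K)}
    (h : comb d u r j J B P (S', V') ≠ 0) :
    (S' = P ∨ (S' ∈ groupG d u r j J B ∧ d (u j) ∉ S' ∧ (S' ∩ P).card = r - 1)) ∧
      ∃ k' ∈ J, d k' ∈ S' ∧ V' = J.erase k' := by
  unfold comb at h
  rw [Pi.add_apply] at h
  have h2 : blkTerm d J P (S', V') ≠ 0 ∨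
      (∑ S ∈ (groupG d u r j J B).filter (fun S => d (u j) ∉ S ∧ (S ∩ P).card = r - 1),
        blkTerm d J S) (S', V') ≠ 0 := by
    by_contra hc
    push_neg at hc
    rw [hc.1, hc.2, add_zero] at h
    exact h rfl
  rcases h2 with h2 | h2
  · obtain ⟨h3, h4⟩ := blkTerm_support h2
    subst h3
    exact ⟨Or.inl rfl, h4⟩
  · rw [Finset.sum_apply] at h2
    obtain ⟨W, hW, hne⟩ := Finset.exists_ne_zero_of_sum_ne_zero h2
    obtain ⟨h3, h4⟩ := blkTerm_support hne
    rw [Finset.mem_filter] at hW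
    subst h3
    exact ⟨Or.inr ⟨hW.1, hW.2.1, hW.2.2⟩, h4⟩

lemma comb_apply_pilot {d : Fin K → Fin N} {u : ℕ → Fin K} {r j : ℕ} {J : Finset (Fin K)}
    {B P : Finset (Fin N)} (hP : d (u j) ∈ P) {k0 : Fin K} (hk0 : k0 ∈ J) (hd : d k0 ∈ P) :
    comb d u r j J B P (P, J.erase k0) = 1 := by
  unfold comb
  rw [Pi.add_apply, blkTerm_apply_one hk0 hd, Finset.sum_apply, Finset.sum_eq_zero, add_zero]
  intro W hW
  by_contra hne
  obtain ⟨h3, _⟩ := blkTerm_support hne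
  rw [Finset.mem_filter] at hW
  exact hW.2.1 (h3 ▸ hP)

lemma comb_apply_aligned {d : Fin K → Fin N} {u : ℕ → Fin K} {r j : ℕ} {J : Finset (Fin K)}
    {B P S : Finset (Fin N)}
    (hS : S ∈ (groupG d u r j J B).filter (fun S => d (u j) ∉ S ∧ (S ∩ P).card = r - 1))
    (hSP : S ≠ P) {k0 : Fin K} (hk0 : k0 ∈ J) (hd : d k0 ∈ S) :
    comb d u r j J B P (S, J.erase k0) = 1 := by
  unfold comb
  rw [Pi.add_apply, Finset.sum_apply,
    Finset.sum_eq_single_of_mem S hS (fun W hW hne => ?_)]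
  · have h0 : blkTerm d J P (S, J.erase k0) = 0 := by
      by_contra hne
      exact hSP (blkTerm_support hne).1
    rw [h0, blkTerm_apply_one hk0 hd, zero_add]
  · by_contra hne2
    exact hne (blkTerm_support hne2).1.symm

lemma comb_mem_transmitted {d : Fin K → Fin N} {u : ℕ → Fin K} {r t : ℕ} {j jmax : ℕ}
    (hj1 : 1 ≤ j) (hj2 : j ≤ jmax) {J : Finset (Fin K)} (hJcard : J.card = t + 1)
    (huj : u j ∈ J) (hprev : ∀ i ∈ Finset.Icc 1 (j - 1), u i ∉ J) {P : Finset (Fin N)}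
    (hP : P ∈ groupG d u r j J (P \ J.image d)) (hdP : d (u j) ∈ P) :
    comb d u r j J (P \ J.image d) P ∈ transmitted d u r t jmax :=
  ⟨j, Finset.mem_Icc.2 ⟨hj1, hj2⟩, J, hJcard, huj, hprev, P \ J.image d, P, hP, hdP, rfl⟩

end Stmt6Aux
section Stmt6Key

variable {N K : ℕ}

lemma cache_mem {r t : ℕ} {d : Fin K → Fin N} {u : ℕ → Fin K} {k : Fin K} {jmax : ℕ}
    {S : Finset (Fin N)} {V : Finset (Fin K)} (hS : S.card = r) (hV : V.card = t)
    (hk : k ∈ V) : subBlk N K S V ∈ directDec d u r t k jmax :=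
  Set.mem_iUnion.2 ⟨0, ⟨S, V, hS, hV, hk, rfl⟩⟩

lemma key {r t : ℕ} {d : Fin K → Fin N} {u : ℕ → Fin K} {k : Fin K} {jmax : ℕ}
    {S : Finset (Fin N)} {V : Finset (Fin K)} (hdk : d k ∈ S)
    {c : Vec N K} (hc : c ∈ transmitted d u r t jmax) (h1 : c (S, V) = 1)
    (hoth : ∀ S' V', (S', V') ≠ (S, V) → c (S', V') ≠ 0 →
      subBlk N K S' V' ∈ directDec d u r t k jmax) :
    subBlk N K S V ∈ directDec d u r t k jmax := by
  classical
  set T := transmitted d u r t jmax with hT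
  set st : ℕ → Set (Vec N K) := fun m => (ddStep (d k) T)^[m] (cacheSet N K r t k) with hst
  have hsucc : ∀ m, st m ⊆ st (m + 1) := by
    intro m
    simp only [hst, Function.iterate_succ_apply']
    exact Set.subset_union_left
  have hmono : ∀ {m n : ℕ}, m ≤ n → st m ⊆ st n := by
    intro m n h
    induction h with
    | refl => exact subset_rfl
    | step _ ih => exact ih.trans (hsucc _)
  have hDD : directDec d u r t k jmax = ⋃ m, st m := rfl
  set coords : Finset (Finset (Fin N) × Finset (Fin K)) :=
    Finset.univ.filter (fun x => x ≠ (S, V) ∧ c x ≠ 0) with hcoords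
  have hcsub : ∀ x ∈ coords, subBlk N K x.1 x.2 ∈ ⋃ m, st m := by
    intro x hx
    rw [hcoords, Finset.mem_filter] at hx
    rw [← hDD]
    exact hoth x.1 x.2 (by rw [Prod.mk.eta]; exact hx.2.1) (by rw [Prod.mk.eta]; exact hx.2.2)
  have hstage : ∃ m, ∀ x ∈ coords, subBlk N K x.1 x.2 ∈ st m := by
    have h1' : ∀ x : coords, ∃ m, subBlk N K x.1.1 x.1.2 ∈ st m := fun x =>
      Set.mem_iUnion.1 (hcsub x.1 x.2)
    choose f hf using h1'
    refine ⟨Finset.univ.sup f, fun x hx =>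
      hmono (Finset.le_sup (Finset.mem_univ (⟨x, hx⟩ : coords))) (hf ⟨x, hx⟩)⟩
  obtain ⟨m, hm⟩ := hstage
  have hIF : interfFree (d k) (st m) c := by
    intro S' V' hne
    by_cases hx : (S', V') = (S, V)
    · left
      rw [Prod.mk.injEq] at hx
      rw [hx.1]
      exact hdk
    · right
      exact hm (S', V') (Finset.mem_filter.2 ⟨Finset.mem_univ _, hx, hne⟩)
  have hdecomp : c = subBlk N K S V + ∑ x ∈ coords, subBlk N K x.1 x.2 := by
    funext y
    rw [Pi.add_apply, Finset.sum_apply]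
    by_cases hy1 : y = (S, V)
    · subst hy1
      rw [h1, subBlk_apply_self, Finset.sum_eq_zero, add_zero]
      intro x hx
      rw [Finset.mem_filter] at hx
      apply subBlk_apply_ne
      rw [Prod.mk.eta]
      exact fun h => hx.2.1 h.symm
    · by_cases hy2 : c y = 0
      · rw [hy2, subBlk_apply_ne hy1, Finset.sum_eq_zero, zero_add]
        intro x hx
        apply subBlk_apply_ne
        rw [Prod.mk.eta]
        rintro rfl
        exact (Finset.mem_filter.1 hx).2.2 hy2
      · have hyc : y ∈ coords := Finset.mem_filter.2 ⟨Finset.mem_univ _, hy1, hy2⟩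
        rw [subBlk_apply_ne hy1, zero_add, Finset.sum_eq_single_of_mem y hyc]
        · rw [zmod2_eq_one hy2]
          exact (subBlk_apply_self y.1 y.2).symm
        · intro x hx hne
          apply subBlk_apply_ne
          rw [Prod.mk.eta]
          exact fun h => hne h.symm
  have hspan : subBlk N K S V ∈
      Submodule.span (ZMod 2) (st m ∪ { c' ∈ T | interfFree (d k) (st m) c' }) := by
    have hcmem : c ∈ Submodule.span (ZMod 2)
        (st m ∪ { c' ∈ T | interfFree (d k) (st m) c' }) :=
      Submodule.subset_span (Or.inr ⟨hc, hIF⟩)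
    have hsum : (∑ x ∈ coords, subBlk N K x.1 x.2) ∈ Submodule.span (ZMod 2)
        (st m ∪ { c' ∈ T | interfFree (d k) (st m) c' }) :=
      Submodule.sum_mem _ (fun x hx => Submodule.subset_span (Or.inl (hm x hx)))
    have heq : subBlk N K S V = c - ∑ x ∈ coords, subBlk N K x.1 x.2 := by
      rw [hdecomp]; abel
    rw [heq]
    exact sub_mem hcmem hsum
  refine Set.mem_iUnion.2 ⟨m + 1, ?_⟩
  show subBlk N K S V ∈ (ddStep (d k) T)^[m + 1] (cacheSet N K r t k)
  rw [Function.iterate_succ_apply']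
  exact Or.inr ⟨⟨S, V, rfl⟩, hspan⟩

end Stmt6Key
section Stmt6A1

variable {N K : ℕ}

lemma A1 {r t : ℕ} {d : Fin K → Fin N} {u : ℕ → Fin K} {k : Fin K} {j' jmax : ℕ}
    (hj1 : 1 ≤ j') (hj2 : j' ≤ jmax)
    {S : Finset (Fin N)} {V : Finset (Fin K)} (hS : S.card = r) (hV : V.card = t)
    (hdkS : d k ∈ S) (hkV : k ∉ V) (hujV : u j' ∈ V)
    (hVprev : ∀ i ∈ Finset.Icc 1 (j' - 1), u i ∉ V)
    (hSL : S ∩ leaderDems d u j' = ∅) :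
    subBlk N K S V ∈ directDec d u r t k jmax := by
  classical
  have hDjL : d (u j') ∈ leaderDems d u j' := mem_leaderDems.2 ⟨j', hj1, le_refl _, rfl⟩
  have hnotin : ∀ x ∈ S, x ∉ leaderDems d u j' := by
    intro x hx hxl
    have : x ∈ S ∩ leaderDems d u j' := Finset.mem_inter.2 ⟨hx, hxl⟩
    rw [hSL] at this
    exact absurd this (Finset.notMem_empty x)
  have hdkL : d k ∉ leaderDems d u j' := hnotin _ hdkS
  have hDjS : d (u j') ∉ S := fun h => hnotin _ h hDjL
  have hne : d k ≠ d (u j') := fun h => hdkL (h ▸ hDjL)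
  set J := insert k V with hJ
  have hkJ : k ∈ J := Finset.mem_insert_self _ _
  have hujJ : u j' ∈ J := Finset.mem_insert_of_mem hujV
  have hJcard : J.card = t + 1 := by rw [hJ, Finset.card_insert_of_notMem hkV, hV]
  have hdkJ : d k ∈ J.image d := Finset.mem_image_of_mem d hkJ
  have hDjJ : d (u j') ∈ J.image d := Finset.mem_image_of_mem d hujJ
  set P := insert (d (u j')) (S.erase (d k)) with hP
  have hr1 : 1 ≤ r := by rw [← hS]; exact Finset.card_pos.2 ⟨_, hdkS⟩
  have hDjSe : d (u j') ∉ S.erase (d k) := fun h => hDjS (Finset.mem_of_mem_erase h)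
  have hDjP : d (u j') ∈ P := Finset.mem_insert_self _ _
  have hPcard : P.card = r := by
    rw [hP, Finset.card_insert_of_notMem hDjSe, Finset.card_erase_of_mem hdkS, hS]
    omega
  have hPL : P ∩ leaderDems d u j' ⊆ {d (u j')} := by
    intro x hx
    rw [Finset.mem_inter, hP, Finset.mem_insert] at hx
    rcases hx.1 with h | h
    · simp [h]
    · exact absurd hx.2 (hnotin _ (Finset.mem_of_mem_erase h))
  have hPL1 : (P ∩ leaderDems d u j').card ≤ 1 :=
    le_trans (Finset.card_le_card hPL) (by simp)
  have hB : S \ J.image d = P \ J.image d := by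
    ext x
    simp only [Finset.mem_sdiff, hP, Finset.mem_insert, Finset.mem_erase]
    constructor
    · rintro ⟨hxS, hxJ⟩
      exact ⟨Or.inr ⟨fun h => hxJ (h ▸ hdkJ), hxS⟩, hxJ⟩
    · rintro ⟨h, hxJ⟩
      rcases h with h | h
      · exact absurd (h ▸ hDjJ) hxJ
      · exact ⟨h.2, hxJ⟩
  have hPgroup : P ∈ groupG d u r j' J (P \ J.image d) :=
    mem_groupG.2 ⟨hPcard, ⟨d (u j'), Finset.mem_inter.2 ⟨hDjP, hDjJ⟩⟩, hPL1, rfl⟩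
  have hSgroup : S ∈ groupG d u r j' J (P \ J.image d) :=
    mem_groupG.2 ⟨hS, ⟨d k, Finset.mem_inter.2 ⟨hdkS, hdkJ⟩⟩, by rw [hSL]; simp, hB⟩
  have hSPint : S ∩ P = S.erase (d k) := by
    ext x
    simp only [Finset.mem_inter, hP, Finset.mem_insert, Finset.mem_erase]
    constructor
    · rintro ⟨hxS, h | h⟩
      · exact absurd (h ▸ hxS) hDjS
      · exact h
    · rintro ⟨hne', hxS⟩
      exact ⟨hxS, Or.inr ⟨hne', hxS⟩⟩
  have hSalign : S ∈ (groupG d u r j' J (P \ J.image d)).filter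
      (fun S'' => d (u j') ∉ S'' ∧ (S'' ∩ P).card = r - 1) :=
    Finset.mem_filter.2 ⟨hSgroup, hDjS,
      by rw [hSPint, Finset.card_erase_of_mem hdkS, hS]⟩
  have hSnP : S ≠ P := fun h => hDjS (h ▸ hDjP)
  have hprev : ∀ i ∈ Finset.Icc 1 (j' - 1), u i ∉ J := by
    intro i hi hiJ
    rw [Finset.mem_Icc] at hi
    have hiL : d (u i) ∈ leaderDems d u j' := mem_leaderDems.2 ⟨i, hi.1, by omega, rfl⟩
    rw [hJ, Finset.mem_insert] at hiJ
    rcases hiJ with h | h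
    · exact hdkL (by rw [← h]; exact hiL)
    · exact hVprev i (Finset.mem_Icc.2 hi) h
  have hc : comb d u r j' J (P \ J.image d) P ∈ transmitted d u r t jmax :=
    comb_mem_transmitted hj1 hj2 hJcard hujJ hprev hPgroup hDjP
  have hJek : J.erase k = V := by rw [hJ, Finset.erase_insert hkV]
  have h1 : comb d u r j' J (P \ J.image d) P (S, V) = 1 := by
    rw [← hJek]
    exact comb_apply_aligned hSalign hSnP hkJ hdkS
  refine key hdkS hc h1 ?_
  intro S' V' hneSV hne0
  obtain ⟨hblock, k', hk'J, hdk'S', hV'⟩ := comb_support hne0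
  by_cases hkk' : k' = k
  · rw [hkk'] at hV' hdk'S'
    have hV'V : V' = V := by rw [hV', hJek]
    exfalso
    rcases hblock with h | h
    · rw [h, hP, Finset.mem_insert] at hdk'S'
      rcases hdk'S' with h2 | h2
      · exact hne h2
      · exact absurd h2 (by simp)
    · obtain ⟨hgrp, hDj', hcard'⟩ := h
      have hS'card : S'.card = r := (mem_groupG.1 hgrp).1
      have hcc := Finset.card_inter_add_card_sdiff P S'
      rw [Finset.inter_comm] at hcard'
      have h5 : (P \ S').card = 1 := by omega
      obtain ⟨a, ha⟩ := Finset.card_eq_one.1 h5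
      have hDjPS : d (u j') ∈ P \ S' := Finset.mem_sdiff.2 ⟨hDjP, hDj'⟩
      rw [ha, Finset.mem_singleton] at hDjPS
      subst hDjPS
      have h7 : S.erase (d k) ⊆ S' := by
        intro x hx
        by_contra hxS'
        have hx2 : x ∈ P \ S' := Finset.mem_sdiff.2 ⟨Finset.mem_insert_of_mem hx, hxS'⟩
        rw [ha, Finset.mem_singleton] at hx2
        exact hDjSe (hx2 ▸ hx)
      have h8 : S ⊆ S' := by
        intro x hx
        by_cases hxdk : x = d k
        · exact hxdk ▸ hdk'S'
        · exact h7 (Finset.mem_erase.2 ⟨hxdk, hx⟩)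
      have h9 : S' = S := (Finset.eq_of_subset_of_card_le h8 (by rw [hS'card, hS])).symm
      exact hneSV (by rw [h9, hV'V])
  · have hkV' : k ∈ V' := by
      rw [hV']
      exact Finset.mem_erase.2 ⟨fun h => hkk' h.symm, hkJ⟩
    have hS'card : S'.card = r := by
      rcases hblock with h | h
      · rw [h, hPcard]
      · exact (mem_groupG.1 h.1).1
    have hV'card : V'.card = t := by
      rw [hV', Finset.card_erase_of_mem hk'J, hJcard]
      omega
    exact cache_mem hS'card hV'card hkV'

end Stmt6A1
section Stmt6Rest

variable {N K : ℕ}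

lemma A2 {r t : ℕ} {d : Fin K → Fin N} {u : ℕ → Fin K} {k : Fin K} {ik j' jmax : ℕ}
    (hLdistinct : ∀ i ∈ Finset.Icc 1 (numDistinct d), ∀ i' ∈ Finset.Icc 1 (numDistinct d),
      i ≠ i' → d (u i) ≠ d (u i'))
    (hik : ik ∈ Finset.Icc 1 (numDistinct d)) (hk : u ik = k)
    (hj1 : 1 ≤ j') (hj2 : j' ≤ jmax) (hjNe : j' ≤ numDistinct d)
    {S : Finset (Fin N)} {V : Finset (Fin K)} (hS : S.card = r) (hV : V.card = t)
    (hdkS : d k ∈ S) (hkV : k ∉ V) (hujV : u j' ∈ V)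
    (hVprev : ∀ i ∈ Finset.Icc 1 (j' - 1), u i ∉ V)
    (hDjS : d (u j') ∈ S) (hSLp : S ∩ leaderDems d u (j' - 1) = ∅)
    (hIH1 : ∀ S' V', S'.card = r → V'.card = t → d k ∈ S' →
      (S' ∩ leaderDems d u (j' - 1)).Nonempty → subBlk N K S' V' ∈ directDec d u r t k jmax) :
    subBlk N K S V ∈ directDec d u r t k jmax := by
  classical
  have hkuj : k ≠ u j' := fun h => hkV (h ▸ hujV)
  have hdkDj : d k ≠ d (u j') := by
    intro h
    rw [← hk] at h
    by_cases hij : ik = j'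
    · exact hkuj (by rw [← hk, hij])
    · exact hLdistinct ik hik j' (Finset.mem_Icc.2 ⟨hj1, hjNe⟩) hij h
  have hnotinp : ∀ x ∈ S, x ∉ leaderDems d u (j' - 1) := by
    intro x hx hxl
    have : x ∈ S ∩ leaderDems d u (j' - 1) := Finset.mem_inter.2 ⟨hx, hxl⟩
    rw [hSLp] at this
    exact absurd this (Finset.notMem_empty x)
  set J := insert k V with hJ
  have hkJ : k ∈ J := Finset.mem_insert_self _ _
  have hujJ : u j' ∈ J := Finset.mem_insert_of_mem hujV
  have hJcard : J.card = t + 1 := by rw [hJ, Finset.card_insert_of_notMem hkV, hV]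
  have hdkJ : d k ∈ J.image d := Finset.mem_image_of_mem d hkJ
  have hSL1 : S ∩ leaderDems d u j' ⊆ {d (u j')} := by
    intro x hx
    rw [Finset.mem_inter] at hx
    obtain ⟨i, h1, h2, h3⟩ := mem_leaderDems.1 hx.2
    by_cases hi : i = j'
    · simp [← h3, hi]
    · exact absurd (mem_leaderDems.2 ⟨i, h1, by omega, h3⟩) (hnotinp _ hx.1)
  have hSgroup : S ∈ groupG d u r j' J (S \ J.image d) :=
    mem_groupG.2 ⟨hS, ⟨d k, Finset.mem_inter.2 ⟨hdkS, hdkJ⟩⟩,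
      le_trans (Finset.card_le_card hSL1) (by simp), rfl⟩
  have hprev : ∀ i ∈ Finset.Icc 1 (j' - 1), u i ∉ J := by
    intro i hi hiJ
    rw [Finset.mem_Icc] at hi
    rw [hJ, Finset.mem_insert] at hiJ
    rcases hiJ with h | h
    · exact hnotinp _ hdkS (mem_leaderDems.2 ⟨i, hi.1, hi.2, by rw [h]⟩)
    · exact hVprev i (Finset.mem_Icc.2 hi) h
  have hc : comb d u r j' J (S \ J.image d) S ∈ transmitted d u r t jmax :=
    comb_mem_transmitted hj1 hj2 hJcard hujJ hprev hSgroup hDjS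
  have hJek : J.erase k = V := by rw [hJ, Finset.erase_insert hkV]
  have h1 : comb d u r j' J (S \ J.image d) S (S, V) = 1 := by
    rw [← hJek]
    exact comb_apply_pilot hDjS hkJ hdkS
  refine key hdkS hc h1 ?_
  intro S' V' hneSV hne0
  obtain ⟨hblock, k', hk'J, hdk'S', hV'⟩ := comb_support hne0
  by_cases hkk' : k' = k
  · rw [hkk'] at hV' hdk'S'
    have hV'V : V' = V := by rw [hV', hJek]
    rcases hblock with h | h
    · exact absurd (by rw [h, hV'V]) hneSV
    · obtain ⟨hgrp, hDj', _⟩ := h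
      have hS'card : S'.card = r := (mem_groupG.1 hgrp).1
      rw [hV'V]
      by_cases hcase : (S' ∩ leaderDems d u (j' - 1)).Nonempty
      · exact hIH1 S' V hS'card hV hdk'S' hcase
      · have hSL' : S' ∩ leaderDems d u j' = ∅ := by
          rw [← Finset.not_nonempty_iff_eq_empty]
          rintro ⟨x, hx⟩
          rw [Finset.mem_inter] at hx
          obtain ⟨i, hi1, hi2, hi3⟩ := mem_leaderDems.1 hx.2
          by_cases hi : i = j'
          · rw [hi] at hi3
            exact hDj' (by rw [hi3]; exact hx.1)
          · exact hcase ⟨x, Finset.mem_inter.2 ⟨hx.1,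
              mem_leaderDems.2 ⟨i, hi1, by omega, hi3⟩⟩⟩
        exact A1 hj1 hj2 hS'card hV hdk'S' hkV hujV hVprev hSL'
  · have hkV' : k ∈ V' := by
      rw [hV']
      exact Finset.mem_erase.2 ⟨fun h => hkk' h.symm, hkJ⟩
    have hS'card : S'.card = r := by
      rcases hblock with h | h
      · rw [h, hS]
      · exact (mem_groupG.1 h.1).1
    have hV'card : V'.card = t := by
      rw [hV', Finset.card_erase_of_mem hk'J, hJcard]
      omega
    exact cache_mem hS'card hV'card hkV'

lemma B1 {r t : ℕ} {d : Fin K → Fin N} {u : ℕ → Fin K} {k : Fin K} {j' jmax : ℕ}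
    (hLdistinct : ∀ i ∈ Finset.Icc 1 (numDistinct d), ∀ i' ∈ Finset.Icc 1 (numDistinct d),
      i ≠ i' → d (u i) ≠ d (u i'))
    (hj1 : 1 ≤ j') (hj2 : j' ≤ jmax) (hjNe : j' ≤ numDistinct d)
    {S : Finset (Fin N)} {V : Finset (Fin K)} (hS : S.card = r) (hV : V.card = t)
    (hkV : k ∉ V) (hkuj : u j' = k)
    (hVL : ∀ i ∈ Finset.Icc 1 j', u i ∉ V)
    (hDjS : d (u j') ∈ S) (hSLp : S ∩ leaderDems d u (j' - 1) = ∅) :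
    subBlk N K S V ∈ directDec d u r t k jmax := by
  classical
  have hdkS : d k ∈ S := by rw [← hkuj]; exact hDjS
  have hnotinp : ∀ x ∈ S, x ∉ leaderDems d u (j' - 1) := by
    intro x hx hxl
    have : x ∈ S ∩ leaderDems d u (j' - 1) := Finset.mem_inter.2 ⟨hx, hxl⟩
    rw [hSLp] at this
    exact absurd this (Finset.notMem_empty x)
  set J := insert k V with hJ
  have hkJ : k ∈ J := Finset.mem_insert_self _ _
  have hujJ : u j' ∈ J := by rw [hkuj]; exact hkJ
  have hJcard : J.card = t + 1 := by rw [hJ, Finset.card_insert_of_notMem hkV, hV]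
  have hdkJ : d k ∈ J.image d := Finset.mem_image_of_mem d hkJ
  have hSL1 : S ∩ leaderDems d u j' ⊆ {d (u j')} := by
    intro x hx
    rw [Finset.mem_inter] at hx
    obtain ⟨i, h1, h2, h3⟩ := mem_leaderDems.1 hx.2
    by_cases hi : i = j'
    · simp [← h3, hi]
    · exact absurd (mem_leaderDems.2 ⟨i, h1, by omega, h3⟩) (hnotinp _ hx.1)
  have hSgroup : S ∈ groupG d u r j' J (S \ J.image d) :=
    mem_groupG.2 ⟨hS, ⟨d k, Finset.mem_inter.2 ⟨hdkS, hdkJ⟩⟩,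
      le_trans (Finset.card_le_card hSL1) (by simp), rfl⟩
  have hprev : ∀ i ∈ Finset.Icc 1 (j' - 1), u i ∉ J := by
    intro i hi hiJ
    rw [Finset.mem_Icc] at hi
    rw [hJ, Finset.mem_insert] at hiJ
    rcases hiJ with h | h
    · refine hLdistinct i (Finset.mem_Icc.2 ⟨hi.1, by omega⟩) j'
        (Finset.mem_Icc.2 ⟨hj1, hjNe⟩) (by omega) ?_
      rw [h, hkuj]
    · exact hVL i (Finset.mem_Icc.2 ⟨hi.1, by omega⟩) h
  have hc : comb d u r j' J (S \ J.image d) S ∈ transmitted d u r t jmax :=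
    comb_mem_transmitted hj1 hj2 hJcard hujJ hprev hSgroup hDjS
  have hJek : J.erase k = V := by rw [hJ, Finset.erase_insert hkV]
  have h1 : comb d u r j' J (S \ J.image d) S (S, V) = 1 := by
    rw [← hJek]
    exact comb_apply_pilot hDjS hkJ hdkS
  refine key hdkS hc h1 ?_
  intro S' V' hneSV hne0
  obtain ⟨hblock, k', hk'J, hdk'S', hV'⟩ := comb_support hne0
  by_cases hkk' : k' = k
  · rw [hkk'] at hV' hdk'S'
    have hV'V : V' = V := by rw [hV', hJek]
    rcases hblock with h | h
    · exact absurd (by rw [h, hV'V]) hneSV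
    · exact absurd (by rw [← hkuj] at hdk'S'; exact hdk'S') h.2.1
  · have hkV' : k ∈ V' := by
      rw [hV']
      exact Finset.mem_erase.2 ⟨fun h => hkk' h.symm, hkJ⟩
    have hS'card : S'.card = r := by
      rcases hblock with h | h
      · rw [h, hS]
      · exact (mem_groupG.1 h.1).1
    have hV'card : V'.card = t := by
      rw [hV', Finset.card_erase_of_mem hk'J, hJcard]
      omega
    exact cache_mem hS'card hV'card hkV'

end Stmt6Rest
section Stmt6B2

variable {N K : ℕ}

lemma B2 {r t : ℕ} {d : Fin K → Fin N} {u : ℕ → Fin K} {k : Fin K} {ik j' jmax : ℕ}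
    (hLdistinct : ∀ i ∈ Finset.Icc 1 (numDistinct d), ∀ i' ∈ Finset.Icc 1 (numDistinct d),
      i ≠ i' → d (u i) ≠ d (u i'))
    (hik : ik ∈ Finset.Icc 1 (numDistinct d)) (hk : u ik = k)
    (hj1 : 1 ≤ j') (hj2 : j' ≤ jmax) (hjNe : j' ≤ numDistinct d)
    {S : Finset (Fin N)} {V : Finset (Fin K)} (hS : S.card = r) (hV : V.card = t)
    (hdkS : d k ∈ S) (hkV : k ∉ V) (hkuj : u j' ≠ k)
    (hVL : ∀ i ∈ Finset.Icc 1 j', u i ∉ V)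
    (hDjS : d (u j') ∈ S) (hSLp : S ∩ leaderDems d u (j' - 1) = ∅)
    (hIH1 : ∀ S' V', S'.card = r → V'.card = t → d k ∈ S' →
      (S' ∩ leaderDems d u (j' - 1)).Nonempty → subBlk N K S' V' ∈ directDec d u r t k jmax) :
    subBlk N K S V ∈ directDec d u r t k jmax := by
  classical
  have hdkDj : d k ≠ d (u j') := by
    intro h
    rw [← hk] at h
    by_cases hij : ik = j'
    · exact hkuj (by rw [← hij]; exact hk)
    · exact hLdistinct ik hik j' (Finset.mem_Icc.2 ⟨hj1, hjNe⟩) hij h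
  have hnotinp : ∀ x ∈ S, x ∉ leaderDems d u (j' - 1) := by
    intro x hx hxl
    have : x ∈ S ∩ leaderDems d u (j' - 1) := Finset.mem_inter.2 ⟨hx, hxl⟩
    rw [hSLp] at this
    exact absurd this (Finset.notMem_empty x)
  have hujV : u j' ∉ V := hVL j' (Finset.mem_Icc.2 ⟨hj1, le_refl _⟩)
  set J := insert (u j') V with hJ
  have hujJ : u j' ∈ J := Finset.mem_insert_self _ _
  have hkJ : k ∉ J := by
    rw [hJ, Finset.mem_insert]
    rintro (h | h)
    · exact hkuj h.symm
    · exact hkV h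
  have hJcard : J.card = t + 1 := by rw [hJ, Finset.card_insert_of_notMem hujV, hV]
  have hDjJ : d (u j') ∈ J.image d := Finset.mem_image_of_mem d hujJ
  have hSL1 : S ∩ leaderDems d u j' ⊆ {d (u j')} := by
    intro x hx
    rw [Finset.mem_inter] at hx
    obtain ⟨i, h1, h2, h3⟩ := mem_leaderDems.1 hx.2
    by_cases hi : i = j'
    · simp [← h3, hi]
    · exact absurd (mem_leaderDems.2 ⟨i, h1, by omega, h3⟩) (hnotinp _ hx.1)
  have hSgroup : S ∈ groupG d u r j' J (S \ J.image d) :=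
    mem_groupG.2 ⟨hS, ⟨d (u j'), Finset.mem_inter.2 ⟨hDjS, hDjJ⟩⟩,
      le_trans (Finset.card_le_card hSL1) (by simp), rfl⟩
  have hprev : ∀ i ∈ Finset.Icc 1 (j' - 1), u i ∉ J := by
    intro i hi hiJ
    rw [Finset.mem_Icc] at hi
    rw [hJ, Finset.mem_insert] at hiJ
    rcases hiJ with h | h
    · exact hLdistinct i (Finset.mem_Icc.2 ⟨hi.1, by omega⟩) j'
        (Finset.mem_Icc.2 ⟨hj1, hjNe⟩) (by omega) (by rw [h])
    · exact hVL i (Finset.mem_Icc.2 ⟨hi.1, by omega⟩) h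
  have hc : comb d u r j' J (S \ J.image d) S ∈ transmitted d u r t jmax :=
    comb_mem_transmitted hj1 hj2 hJcard hujJ hprev hSgroup hDjS
  have hJek : J.erase (u j') = V := by rw [hJ, Finset.erase_insert hujV]
  have h1 : comb d u r j' J (S \ J.image d) S (S, V) = 1 := by
    rw [← hJek]
    exact comb_apply_pilot hDjS hujJ hDjS
  refine key hdkS hc h1 ?_
  intro S' V' hneSV hne0
  obtain ⟨hblock, k', hk'J, hdk'S', hV'⟩ := comb_support hne0
  by_cases hk'uj : k' = u j'
  · rw [hk'uj] at hV' hdk'S'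
    have hV'V : V' = V := by rw [hV', hJek]
    rcases hblock with h | h
    · exact absurd (by rw [h, hV'V]) hneSV
    · exact absurd hdk'S' h.2.1
  · have hk'V : k' ∈ V := by
      have := hk'J
      rw [hJ, Finset.mem_insert] at this
      tauto
    have hujV' : u j' ∈ V' := by
      rw [hV']
      exact Finset.mem_erase.2 ⟨fun h => hk'uj h.symm, hujJ⟩
    have hkV' : k ∉ V' := fun h => hkJ (hV' ▸ h |> Finset.mem_of_mem_erase)
    have hV'card : V'.card = t := by
      rw [hV', Finset.card_erase_of_mem hk'J, hJcard]
      omega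
    have hV'prev : ∀ i ∈ Finset.Icc 1 (j' - 1), u i ∉ V' := by
      intro i hi hiV'
      rw [Finset.mem_Icc] at hi
      exact hprev i (Finset.mem_Icc.2 hi) (hV' ▸ hiV' |> Finset.mem_of_mem_erase)
    by_cases hS'S : S' = S
    · rw [hS'S]
      exact A2 hLdistinct hik hk hj1 hj2 hjNe hS hV'card hdkS hkV' hujV' hV'prev hDjS hSLp hIH1
    · have h := hblock.resolve_left hS'S
      obtain ⟨hgrp, hDj', hcard'⟩ := h
      have hS'card : S'.card = r := (mem_groupG.1 hgrp).1
      -- derive d k ∈ S'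
      have hr1 : 1 ≤ r := by rw [← hS]; exact Finset.card_pos.2 ⟨_, hdkS⟩
      have hcc := Finset.card_inter_add_card_sdiff S S'
      rw [Finset.inter_comm] at hcard'
      have h5 : (S \ S').card = 1 := by omega
      obtain ⟨a, ha⟩ := Finset.card_eq_one.1 h5
      have hDjSS : d (u j') ∈ S \ S' := Finset.mem_sdiff.2 ⟨hDjS, hDj'⟩
      rw [ha, Finset.mem_singleton] at hDjSS
      have hdkS' : d k ∈ S' := by
        by_contra hcon
        have : d k ∈ S \ S' := Finset.mem_sdiff.2 ⟨hdkS, hcon⟩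
        rw [ha, Finset.mem_singleton] at this
        exact hdkDj (this.trans hDjSS.symm)
      by_cases hcase : (S' ∩ leaderDems d u (j' - 1)).Nonempty
      · exact hIH1 S' V' hS'card hV'card hdkS' hcase
      · have hSL' : S' ∩ leaderDems d u j' = ∅ := by
          rw [← Finset.not_nonempty_iff_eq_empty]
          rintro ⟨x, hx⟩
          rw [Finset.mem_inter] at hx
          obtain ⟨i, hi1, hi2, hi3⟩ := mem_leaderDems.1 hx.2
          by_cases hi : i = j'
          · rw [hi] at hi3
            exact hDj' (by rw [hi3]; exact hx.1)
          · exact hcase ⟨x, Finset.mem_inter.2 ⟨hx.1,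
              mem_leaderDems.2 ⟨i, hi1, by omega, hi3⟩⟩⟩
        exact A1 hj1 hj2 hS'card hV'card hdkS' hkV' hujV' hV'prev hSL'

end Stmt6B2
section Stmt6Main

variable {N K : ℕ}

lemma mainInd {r t : ℕ} {d : Fin K → Fin N} {u : ℕ → Fin K}
    (hLdistinct : ∀ i ∈ Finset.Icc 1 (numDistinct d), ∀ i' ∈ Finset.Icc 1 (numDistinct d),
      i ≠ i' → d (u i) ≠ d (u i'))
    {k : Fin K} {ik : ℕ}
    (hik : ik ∈ Finset.Icc 1 (numDistinct d)) (hk : u ik = k)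
    {jmax : ℕ} (hjNe : jmax ≤ numDistinct d) :
    ∀ j', 1 ≤ j' → j' ≤ jmax → ∀ S V, S.card = r → V.card = t → d k ∈ S →
      ((S ∩ leaderDems d u j').Nonempty ∨ (V ∩ (Finset.Icc 1 j').image u).Nonempty) →
      subBlk N K S V ∈ directDec d u r t k jmax := by
  intro j'
  induction j' using Nat.strong_induction_on with
  | _ j' IH =>
  intro hj1 hj2 S V hS hV hdkS hcov
  by_cases hkV : k ∈ V
  · exact cache_mem hS hV hkV
  have hjNe' : j' ≤ numDistinct d := le_trans hj2 hjNe
  have hIH1 : ∀ S' V', S'.card = r → V'.card = t → d k ∈ S' →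
      (S' ∩ leaderDems d u (j' - 1)).Nonempty →
      subBlk N K S' V' ∈ directDec d u r t k jmax := by
    intro S' V' hS' hV' hdk' hne
    obtain ⟨x, hx⟩ := hne
    rw [Finset.mem_inter] at hx
    obtain ⟨i, hi1, hi2, hi3⟩ := mem_leaderDems.1 hx.2
    exact IH i (by omega) hi1 (by omega) S' V' hS' hV' hdk'
      (Or.inl ⟨x, Finset.mem_inter.2 ⟨hx.1, mem_leaderDems.2 ⟨i, hi1, le_refl _, hi3⟩⟩⟩)
  by_cases hV1 : ∃ i, i ∈ Finset.Icc 1 j' ∧ u i ∈ V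
  · obtain ⟨i1, hi1a, hi1b⟩ := hV1
    set F := (Finset.Icc 1 j').filter (fun i => u i ∈ V) with hF
    have hFne : F.Nonempty := ⟨i1, Finset.mem_filter.2 ⟨hi1a, hi1b⟩⟩
    set i0 := F.min' hFne with hi0def
    have hi0F : i0 ∈ F := Finset.min'_mem _ _
    rw [hF, Finset.mem_filter, Finset.mem_Icc] at hi0F
    by_cases hi0 : i0 < j'
    · exact IH i0 hi0 hi0F.1.1 (by omega) S V hS hV hdkS
        (Or.inr ⟨u i0, Finset.mem_inter.2 ⟨hi0F.2,
          Finset.mem_image.2 ⟨i0, Finset.mem_Icc.2 ⟨hi0F.1.1, le_refl _⟩, rfl⟩⟩⟩)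
    · have hi0j : i0 = j' := by omega
      have hujV : u j' ∈ V := hi0j ▸ hi0F.2
      have hVprev : ∀ i ∈ Finset.Icc 1 (j' - 1), u i ∉ V := by
        intro i hi hiV
        rw [Finset.mem_Icc] at hi
        have hiF : i ∈ F := Finset.mem_filter.2 ⟨Finset.mem_Icc.2 ⟨hi.1, by omega⟩, hiV⟩
        have := Finset.min'_le F i hiF
        omega
      by_cases hSLp : (S ∩ leaderDems d u (j' - 1)).Nonempty
      · exact hIH1 S V hS hV hdkS hSLp
      · rw [Finset.not_nonempty_iff_eq_empty] at hSLp
        by_cases hDjS : d (u j') ∈ S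
        · exact A2 hLdistinct hik hk hj1 hj2 hjNe' hS hV hdkS hkV hujV hVprev hDjS hSLp hIH1
        · have hSL : S ∩ leaderDems d u j' = ∅ := by
            rw [← Finset.not_nonempty_iff_eq_empty]
            rintro ⟨x, hx⟩
            rw [Finset.mem_inter] at hx
            obtain ⟨i, hia, hib, hic⟩ := mem_leaderDems.1 hx.2
            by_cases hij : i = j'
            · rw [hij] at hic
              exact hDjS (by rw [hic]; exact hx.1)
            · exact (Finset.eq_empty_iff_forall_notMem.1 hSLp x)
                (Finset.mem_inter.2 ⟨hx.1, mem_leaderDems.2 ⟨i, hia, by omega, hic⟩⟩)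
          exact A1 hj1 hj2 hS hV hdkS hkV hujV hVprev hSL
  · push_neg at hV1
    have hVL : ∀ i ∈ Finset.Icc 1 j', u i ∉ V := fun i hi => hV1 i hi
    have hSL : (S ∩ leaderDems d u j').Nonempty := by
      rcases hcov with h | h
      · exact h
      · obtain ⟨x, hx⟩ := h
        rw [Finset.mem_inter] at hx
        obtain ⟨i, hi, hieq⟩ := Finset.mem_image.1 hx.2
        exact absurd (hieq ▸ hx.1) (hVL i hi)
    by_cases hSLp : (S ∩ leaderDems d u (j' - 1)).Nonempty
    · exact hIH1 S V hS hV hdkS hSLp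
    · rw [Finset.not_nonempty_iff_eq_empty] at hSLp
      have hDjS : d (u j') ∈ S := by
        obtain ⟨x, hx⟩ := hSL
        rw [Finset.mem_inter] at hx
        obtain ⟨i, hia, hib, hic⟩ := mem_leaderDems.1 hx.2
        by_cases hij : i = j'
        · rw [hij] at hic
          rw [hic]
          exact hx.1
        · exact absurd (Finset.mem_inter.2 ⟨hx.1, mem_leaderDems.2 ⟨i, hia, by omega, hic⟩⟩)
            (Finset.eq_empty_iff_forall_notMem.1 hSLp x)
      by_cases hkuj : u j' = k
      · exact B1 hLdistinct hj1 hj2 hjNe' hS hV hkV hkuj hVL hDjS hSLp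
      · exact B2 hLdistinct hik hk hj1 hj2 hjNe' hS hV hdkS hkV hkuj hVL hDjS hSLp hIH1

end Stmt6Main

theorem statement6 (N K r t : ℕ) (hN : 1 ≤ N) (hK : 1 ≤ K) (hr : 1 ≤ r) (hrN : r ≤ N)
    (htK : t ≤ K)
    (d : Fin K → Fin N) (u : ℕ → Fin K)
    (hLdistinct : ∀ i ∈ Finset.Icc 1 (numDistinct d), ∀ i' ∈ Finset.Icc 1 (numDistinct d),
      i ≠ i' → d (u i) ≠ d (u i'))
    (hLcover : ∀ k : Fin K, ∃ i ∈ Finset.Icc 1 (numDistinct d), d (u i) = d k)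
    (hcase : (r = 1 ∨ r = 2 ∨ r = N - 1 ∨ r = N) ∨
      (t = 1 ∨ t = 2 ∨ t = K - 1 ∨ t = K) ∨ Function.Injective d)
    -- `k` is a leader
    (k : Fin K) (ik : ℕ) (hik : ik ∈ Finset.Icc 1 (numDistinct d)) (hk : u ik = k)
    (j : ℕ) (hj : j ∈ Finset.Icc 1 (min (N - r + 1) (min (K - t) (numDistinct d)))) :
    -- at the end of step `j`, user `k` directly decodes every block `W_S` with
    -- `d_k ∈ S` and `S ∩ {d_{u_1},…,d_{u_j}} ≠ ∅` (i.e. all its sub-blocks) …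
    (∀ S : Finset (Fin N), S.card = r → d k ∈ S → (S ∩ leaderDems d u j).Nonempty →
      ∀ V : Finset (Fin K), V.card = t → subBlk N K S V ∈ directDec d u r t k j) ∧
    -- … and every sub-block `W_{S₁,V₁}` with `d_k ∈ S₁` and `V₁ ∩ {u_1,…,u_j} ≠ ∅`
    (∀ (S₁ : Finset (Fin N)) (V₁ : Finset (Fin K)), S₁.card = r → d k ∈ S₁ →
      V₁.card = t → (V₁ ∩ (Finset.Icc 1 j).image u).Nonempty →
      subBlk N K S₁ V₁ ∈ directDec d u r t k j) := by
  rw [Finset.mem_Icc] at hj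
  have hjNe : j ≤ numDistinct d := by omega
  constructor
  · intro S hS hdkS hSL V hV
    exact mainInd hLdistinct hik hk hjNe j hj.1 (le_refl j) S V hS hV hdkS (Or.inl hSL)
  · intro S₁ V₁ hS₁ hdkS₁ hV₁ hV₁L
    exact mainInd hLdistinct hik hk hjNe j hj.1 (le_refl j) S₁ V₁ hS₁ hV₁ hdkS₁ (Or.inr hV₁L)
end

section
/- (Direct decoding of sub-blocks cached by earlier leaders.) For any integers t ∈ {0,...,K} and r ∈ {1,...,N}, in the proposed interference-alignment scheme, for each user k' and each step j ∈ {1,...,min(N−r+1, K−t, g(d_{k'}))}, where g(i) is the index of the leader demanding file F_i: at the end of step j, user k' can decode by direct decoding every sub-block W_{S_1,V_1} with |S_1| = r, d_{k'} ∈ S_1, |V_1| = t, and V_1 ∩ {u_1,...,u_j} ≠ ∅. -/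
open Finset

section Infra

variable {N K : ℕ}

lemma subBlk_eq_of_ne_zero {S : Finset (Fin N)} {V : Finset (Fin K)}
    {p : Finset (Fin N) × Finset (Fin K)} (h : subBlk N K S V p ≠ 0) : p = (S, V) := by
  by_contra hc
  simp [subBlk, Pi.single_apply, hc] at h

lemma cache_subset_directDec (d : Fin K → Fin N) (u : ℕ → Fin K) (r t : ℕ) (k' : Fin K)
    (jm : ℕ) : cacheSet N K r t k' ⊆ directDec d u r t k' jm := by
  intro v hv
  exact Set.mem_iUnion.2 ⟨0, hv⟩

lemma cached_mem (d : Fin K → Fin N) (u : ℕ → Fin K) (r t : ℕ) (k' : Fin K) (jm : ℕ)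
    {S : Finset (Fin N)} {V : Finset (Fin K)} (hS : S.card = r) (hV : V.card = t)
    (hk : k' ∈ V) : subBlk N K S V ∈ directDec d u r t k' jm :=
  cache_subset_directDec d u r t k' jm ⟨S, V, hS, hV, hk, rfl⟩

lemma interfFree_mono {dk : Fin N} {Dec Dec' : Set (Vec N K)} (h : Dec ⊆ Dec') {c : Vec N K}
    (hc : interfFree dk Dec c) : interfFree dk Dec' c :=
  fun S V hne => (hc S V hne).imp id (fun h' => h h')

lemma ddStep_mono {dk : Fin N} {T T' Dec Dec' : Set (Vec N K)} (hT : T ⊆ T')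
    (hD : Dec ⊆ Dec') : ddStep dk T Dec ⊆ ddStep dk T' Dec' := by
  intro v hv
  rcases hv with h | ⟨hex, hsp⟩
  · exact Or.inl (hD h)
  · refine Or.inr ⟨hex, ?_⟩
    refine Submodule.span_mono ?_ hsp
    rintro x (hx | ⟨hx1, hx2⟩)
    · exact Or.inl (hD hx)
    · exact Or.inr ⟨hT hx1, interfFree_mono hD hx2⟩

lemma subset_ddStep {dk : Fin N} {T Dec : Set (Vec N K)} : Dec ⊆ ddStep dk T Dec :=
  Set.subset_union_left

lemma iterate_ddStep_mono {dk : Fin N} {T T' : Set (Vec N K)} (hT : T ⊆ T') (m : ℕ)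
    {C C' : Set (Vec N K)} (hC : C ⊆ C') : (ddStep dk T)^[m] C ⊆ (ddStep dk T')^[m] C' := by
  induction m with
  | zero => simpa
  | succ m ih =>
    rw [Function.iterate_succ_apply', Function.iterate_succ_apply']
    exact ddStep_mono hT ih

lemma iterate_ddStep_le {dk : Fin N} {T : Set (Vec N K)} {C : Set (Vec N K)} :
    ∀ {m m' : ℕ}, m ≤ m' → (ddStep dk T)^[m] C ⊆ (ddStep dk T)^[m'] C := by
  intro m m' h
  induction m' with
  | zero => simp_all
  | succ n ih =>
    rcases Nat.lt_or_ge m (n+1) with h' | h'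
    · refine (ih (by omega)).trans ?_
      rw [Function.iterate_succ_apply']
      exact subset_ddStep
    · have : m = n + 1 := by omega
      subst this; rfl

lemma transmitted_mono {d : Fin K → Fin N} {u : ℕ → Fin K} {r t jm jm' : ℕ} (h : jm ≤ jm') :
    transmitted (N := N) d u r t jm ⊆ transmitted d u r t jm' := by
  rintro v ⟨j, hj, rest⟩
  exact ⟨j, Finset.mem_Icc.2 ⟨(Finset.mem_Icc.1 hj).1, (Finset.mem_Icc.1 hj).2.trans h⟩, rest⟩

lemma directDec_mono (d : Fin K → Fin N) (u : ℕ → Fin K) (r t : ℕ) (k' : Fin K)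
    {jm jm' : ℕ} (h : jm ≤ jm') :
    directDec d u r t k' jm ⊆ directDec d u r t k' jm' :=
  Set.iUnion_mono fun m => iterate_ddStep_mono (transmitted_mono h) m subset_rfl

end Infra
section Saturation

variable {N K : ℕ}

lemma directDec_saturated (d : Fin K → Fin N) (u : ℕ → Fin K) (r t : ℕ) (k' : Fin K)
    (jm : ℕ) (v : Vec N K) (hv1 : ∃ S V, v = subBlk N K S V)
    (hv : v ∈ Submodule.span (ZMod 2) (directDec d u r t k' jm ∪
      { c ∈ transmitted d u r t jm | interfFree (d k') (directDec d u r t k' jm) c })) :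
    v ∈ directDec d u r t k' jm := by
  classical
  set T := transmitted (N := N) d u r t jm with hT
  set dk := d k' with hdk
  set Dec : ℕ → Set (Vec N K) := fun m => (ddStep dk T)^[m] (cacheSet N K r t k') with hDec
  have hDD : directDec d u r t k' jm = ⋃ m, Dec m := rfl
  have hDecmono : ∀ {m m'}, m ≤ m' → Dec m ⊆ Dec m' := fun h => iterate_ddStep_le h
  have hIFlevel : ∀ c : Vec N K, interfFree dk (directDec d u r t k' jm) c →
      ∃ m, interfFree dk (Dec m) c := by
    intro c hc
    have hch : ∀ p : Finset (Fin N) × Finset (Fin K),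
        ∃ m, (c p ≠ 0 ∧ dk ∉ p.1) → subBlk N K p.1 p.2 ∈ Dec m := by
      intro p
      by_cases hp : c p ≠ 0 ∧ dk ∉ p.1
      · rcases hc p.1 p.2 hp.1 with h | h
        · exact absurd h hp.2
        · rw [hDD] at h
          rcases Set.mem_iUnion.1 h with ⟨m, hm⟩
          exact ⟨m, fun _ => hm⟩
      · exact ⟨0, fun h => absurd h hp⟩
    choose g hg using hch
    refine ⟨Finset.univ.sup g, ?_⟩
    intro S V hne
    by_cases hdkS : dk ∈ S
    · exact Or.inl hdkS
    · exact Or.inr (hDecmono (Finset.le_sup (Finset.mem_univ (S, V)))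
        (hg (S, V) ⟨hne, hdkS⟩))
  obtain ⟨G, hGsub, hvG⟩ := Submodule.mem_span_finite_of_mem_span hv
  have hch2 : ∀ x : Vec N K, ∃ m, x ∈ (G : Set (Vec N K)) →
      x ∈ Dec m ∪ {c ∈ T | interfFree dk (Dec m) c} := by
    intro x
    by_cases hx : x ∈ (G : Set (Vec N K))
    · rcases hGsub hx with h | ⟨hxT, hxIF⟩
      · rw [hDD] at h
        rcases Set.mem_iUnion.1 h with ⟨m, hm⟩
        exact ⟨m, fun _ => Or.inl hm⟩
      · rcases hIFlevel x hxIF with ⟨m, hm⟩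
        exact ⟨m, fun _ => Or.inr ⟨hxT, hm⟩⟩
    · exact ⟨0, fun h => absurd h hx⟩
  choose g hg using hch2
  set M := G.sup g with hM
  have hGM : (G : Set (Vec N K)) ⊆ Dec M ∪ {c ∈ T | interfFree dk (Dec M) c} := by
    intro x hx
    have hle : g x ≤ M := Finset.le_sup (by exact_mod_cast hx)
    rcases hg x hx with h | ⟨hxT, hxIF⟩
    · exact Or.inl (hDecmono hle h)
    · exact Or.inr ⟨hxT, interfFree_mono (hDecmono hle) hxIF⟩
  have hv' : v ∈ Submodule.span (ZMod 2) (Dec M ∪ {c ∈ T | interfFree dk (Dec M) c}) :=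
    Submodule.span_mono hGM hvG
  have hstep : v ∈ ddStep dk T (Dec M) := Or.inr ⟨hv1, hv'⟩
  rw [hDD]
  refine Set.mem_iUnion.2 ⟨M + 1, ?_⟩
  show v ∈ (ddStep dk T)^[M+1] (cacheSet N K r t k')
  rw [Function.iterate_succ_apply']
  exact hstep

end Saturation
section Decode

variable {N K : ℕ}

lemma comb_repr {d : Fin K → Fin N} {u : ℕ → Fin K} {r j : ℕ} {J : Finset (Fin K)}
    {B P : Finset (Fin N)} (hP : d (u j) ∈ P) :
    comb d u r j J B P = ∑ S ∈ insert P ((groupG d u r j J B).filter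
      (fun S => d (u j) ∉ S ∧ (S ∩ P).card = r - 1)), blkTerm d J S := by
  rw [Finset.sum_insert (by simp [Finset.mem_filter, hP])]
  rfl

lemma interfFree_of_repr {d : Fin K → Fin N} (k' : Fin K) (Dec : Set (Vec N K))
    {J : Finset (Fin K)} {blocks : Finset (Finset (Fin N))} {c : Vec N K}
    (hrepr : c = ∑ S ∈ blocks, blkTerm d J S)
    (h : ∀ S ∈ blocks, ∀ k ∈ J, d k ∈ S →
      (d k' ∈ S ∨ subBlk N K S (J.erase k) ∈ Dec)) :
    interfFree (d k') Dec c := by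
  intro S V hne
  rw [hrepr, Finset.sum_apply] at hne
  obtain ⟨S', hS', hS'ne⟩ := Finset.exists_ne_zero_of_sum_ne_zero hne
  rw [blkTerm, Finset.sum_apply] at hS'ne
  obtain ⟨k, hk, hkne⟩ := Finset.exists_ne_zero_of_sum_ne_zero hS'ne
  have hpair := subBlk_eq_of_ne_zero hkne
  obtain ⟨hSe, hVe⟩ := Prod.mk.injEq .. ▸ hpair
  rw [Finset.mem_filter] at hk
  rw [hSe, hVe]
  exact h S' hS' k hk.1 hk.2

lemma decode_one (d : Fin K → Fin N) (u : ℕ → Fin K) (r t : ℕ) (k' : Fin K) (jm : ℕ)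
    (J : Finset (Fin K)) (blocks : Finset (Finset (Fin N))) (c : Vec N K)
    (hcT : c ∈ transmitted d u r t jm)
    (hrepr : c = ∑ S ∈ blocks, blkTerm d J S)
    (S₁ : Finset (Fin N)) (k₀ : Fin K) (hS₁ : S₁ ∈ blocks) (hk₀J : k₀ ∈ J)
    (hk₀d : d k₀ ∈ S₁)
    (hIF : interfFree (d k') (directDec d u r t k' jm) c)
    (hknown : ∀ S ∈ blocks, ∀ k ∈ J, d k ∈ S → ¬(S = S₁ ∧ k = k₀) →
      subBlk N K S (J.erase k) ∈ directDec d u r t k' jm) :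
    subBlk N K S₁ (J.erase k₀) ∈ directDec d u r t k' jm := by
  classical
  apply directDec_saturated d u r t k' jm _ ⟨S₁, J.erase k₀, rfl⟩
  set Gen : Set (Vec N K) := directDec d u r t k' jm ∪
      { c ∈ transmitted d u r t jm | interfFree (d k') (directDec d u r t k' jm) c } with hGen
  have hcg : c ∈ Submodule.span (ZMod 2) Gen :=
    Submodule.subset_span (Or.inr ⟨hcT, hIF⟩)
  have hDsub : directDec d u r t k' jm ⊆ Gen := Set.subset_union_left
  have hk₀f : k₀ ∈ J.filter (fun k => d k ∈ S₁) := Finset.mem_filter.2 ⟨hk₀J, hk₀d⟩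
  have hid : subBlk N K S₁ (J.erase k₀) =
      c - (∑ S ∈ blocks.erase S₁, blkTerm d J S) -
        (∑ k ∈ (J.filter (fun k => d k ∈ S₁)).erase k₀, subBlk N K S₁ (J.erase k)) := by
    rw [hrepr, ← Finset.sum_erase_add _ _ hS₁]
    show _ = _ + blkTerm d J S₁ - _ - _
    rw [blkTerm, ← Finset.sum_erase_add _ _ hk₀f]
    abel
  rw [hid]
  refine Submodule.sub_mem _ (Submodule.sub_mem _ hcg ?_) ?_
  · refine Submodule.sum_mem _ fun S hS => ?_
    have hS' := Finset.mem_erase.1 hS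
    rw [blkTerm]
    refine Submodule.sum_mem _ fun k hk => ?_
    rw [Finset.mem_filter] at hk
    exact Submodule.subset_span (hDsub
      (hknown S hS'.2 k hk.1 hk.2 (fun hh => hS'.1 hh.1)))
  · refine Submodule.sum_mem _ fun k hk => ?_
    have hk' := Finset.mem_erase.1 hk
    rw [Finset.mem_filter] at hk'
    exact Submodule.subset_span (hDsub
      (hknown S₁ hS₁ k hk'.2.1 hk'.2.2 (fun hh => hk'.1 hh.2)))

end Decode
section Cases

variable {N K : ℕ}

lemma lemB (d : Fin K → Fin N) (u : ℕ → Fin K) (r t : ℕ) (k' : Fin K)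
    (hLd : ∀ i ∈ Finset.Icc 1 (numDistinct d), ∀ i' ∈ Finset.Icc 1 (numDistinct d),
      i ≠ i' → d (u i) ≠ d (u i'))
    (f : ℕ) (hfND : f ≤ numDistinct d) (hfd : d (u f) = d k')
    (j : ℕ) (hj1 : 1 ≤ j) (hjf : j ≤ f)
    (V₁ : Finset (Fin K)) (hV₁ : V₁.card = t) (hujV : u j ∈ V₁) (hk'V : k' ∉ V₁)
    (hprev : ∀ i, 1 ≤ i → i ≤ j - 1 → u i ∉ V₁)
    (S : Finset (Fin N)) (hS : S.card = r) (hDS : d k' ∈ S)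
    (hSLD : ∀ i, 1 ≤ i → i ≤ j → d (u i) ∉ S) :
    subBlk N K S V₁ ∈ directDec d u r t k' j := by
  classical
  have hr1 : 1 ≤ r := hS ▸ Finset.card_pos.2 ⟨_, hDS⟩
  have hES : d (u j) ∉ S := hSLD j hj1 le_rfl
  have hDE : d k' ≠ d (u j) := fun h => hES (h ▸ hDS)
  set J := insert k' V₁ with hJ
  have hJcard : J.card = t + 1 := by rw [hJ, Finset.card_insert_of_notMem hk'V, hV₁]
  have hk'J : k' ∈ J := Finset.mem_insert_self _ _
  have hujJ : u j ∈ J := Finset.mem_insert_of_mem hujV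
  have hDim : d k' ∈ J.image d := Finset.mem_image.2 ⟨k', hk'J, rfl⟩
  have hEim : d (u j) ∈ J.image d := Finset.mem_image.2 ⟨u j, hujJ, rfl⟩
  set P := insert (d (u j)) (S.erase (d k')) with hP
  have hEeD : d (u j) ∉ S.erase (d k') := fun h => hES (Finset.mem_of_mem_erase h)
  have hcardSe : (S.erase (d k')).card = r - 1 := by rw [Finset.card_erase_of_mem hDS, hS]
  have hPcard : P.card = r := by
    rw [hP, Finset.card_insert_of_notMem hEeD, hcardSe]; omega
  set B := S \ J.image d with hB
  have hPB : P \ J.image d = B := by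
    ext x
    simp only [hP, hB, Finset.mem_sdiff, Finset.mem_insert, Finset.mem_erase]
    constructor
    · rintro ⟨(rfl | ⟨hxD, hxS⟩), hxim⟩
      · exact absurd hEim hxim
      · exact ⟨hxS, hxim⟩
    · rintro ⟨hxS, hxim⟩
      exact ⟨Or.inr ⟨fun h => hxim (h ▸ hDim), hxS⟩, hxim⟩
  have hSLDe : S ∩ leaderDems d u j = ∅ := by
    rw [Finset.eq_empty_iff_forall_notMem]
    intro x hx
    obtain ⟨hxS, hxL⟩ := Finset.mem_inter.1 hx
    obtain ⟨i, hi, hxe⟩ := Finset.mem_image.1 hxL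
    rw [Finset.mem_Icc] at hi
    exact hSLD i hi.1 hi.2 (by rwa [hxe])
  have hSgrp : S ∈ groupG d u r j J B :=
    mem_groupG.2 ⟨hS, ⟨d k', Finset.mem_inter.2 ⟨hDS, hDim⟩⟩, by rw [hSLDe]; simp, rfl⟩
  have hPLD : (P ∩ leaderDems d u j).card ≤ 1 := by
    have hsub : P ∩ leaderDems d u j ⊆ {d (u j)} := by
      intro x hx
      obtain ⟨hxP, hxL⟩ := Finset.mem_inter.1 hx
      rcases Finset.mem_insert.1 hxP with rfl | hxe
      · exact Finset.mem_singleton_self _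
      · exfalso
        obtain ⟨i, hi, hxe2⟩ := Finset.mem_image.1 hxL
        rw [Finset.mem_Icc] at hi
        exact hSLD i hi.1 hi.2 (by rw [hxe2]; exact Finset.mem_of_mem_erase hxe)
    exact le_trans (Finset.card_le_card hsub) (by simp)
  have hEP : d (u j) ∈ P := Finset.mem_insert_self _ _
  have hPgrp : P ∈ groupG d u r j J B :=
    mem_groupG.2 ⟨hPcard, ⟨d (u j), Finset.mem_inter.2 ⟨hEP, hEim⟩⟩, hPLD, hPB⟩
  have hnotJ : ∀ i ∈ Finset.Icc 1 (j - 1), u i ∉ J := by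
    intro i hi
    rw [Finset.mem_Icc] at hi
    rw [hJ, Finset.mem_insert]
    push_neg
    refine ⟨fun h => ?_, hprev i hi.1 hi.2⟩
    exact hLd i (Finset.mem_Icc.2 ⟨hi.1, by omega⟩) f (Finset.mem_Icc.2 ⟨by omega, hfND⟩)
      (by omega) (by rw [h, hfd])
  have hcT : comb d u r j J B P ∈ transmitted d u r t j :=
    ⟨j, Finset.mem_Icc.2 ⟨hj1, le_rfl⟩, J, hJcard, hujJ, hnotJ, B, P, hPgrp, hEP, rfl⟩
  set F := (groupG d u r j J B).filter
    (fun S' => d (u j) ∉ S' ∧ (S' ∩ P).card = r - 1) with hF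
  have hrepr : comb d u r j J B P = ∑ S' ∈ insert P F, blkTerm d J S' := comb_repr hEP
  have hSP : S ∩ P = S.erase (d k') := by
    ext x
    simp only [hP, Finset.mem_inter, Finset.mem_insert, Finset.mem_erase]
    constructor
    · rintro ⟨hxS, (rfl | ⟨hxD, _⟩)⟩
      · exact absurd hxS hES
      · exact ⟨hxD, hxS⟩
    · rintro ⟨hxD, hxS⟩
      exact ⟨hxS, Or.inr ⟨hxD, hxS⟩⟩
  have hSF : S ∈ F := Finset.mem_filter.2 ⟨hSgrp, hES, by rw [hSP, hcardSe]⟩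
  have hblcard : ∀ S' ∈ insert P F, S'.card = r := by
    intro S' hS'
    rcases Finset.mem_insert.1 hS' with rfl | hS'
    · exact hPcard
    · exact (mem_groupG.1 (Finset.mem_filter.1 hS').1).1
  have hcached : ∀ S' ∈ insert P F, ∀ k ∈ J, k ≠ k' →
      subBlk N K S' (J.erase k) ∈ directDec d u r t k' j := by
    intro S' hS' k hkJ hkk
    refine cached_mem d u r t k' j (hblcard S' hS') ?_ ?_
    · rw [Finset.card_erase_of_mem hkJ, hJcard]
      omega
    · exact Finset.mem_erase.2 ⟨fun h => hkk h.symm, hk'J⟩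
  have hIF : interfFree (d k') (directDec d u r t k' j) (comb d u r j J B P) := by
    refine interfFree_of_repr k' _ hrepr ?_
    intro S' hS' k hkJ hdkS'
    by_cases hkk : k = k'
    · rw [← hkk]; exact Or.inl hdkS'
    · exact Or.inr (hcached S' hS' k hkJ hkk)
  have hknown : ∀ S' ∈ insert P F, ∀ k ∈ J, d k ∈ S' → ¬(S' = S ∧ k = k') →
      subBlk N K S' (J.erase k) ∈ directDec d u r t k' j := by
    intro S' hS' k hkJ hdkS' hne
    by_cases hkk : k = k'
    · exfalso
      rw [hkk] at hdkS'
      apply hne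
      refine ⟨?_, hkk⟩
      rcases Finset.mem_insert.1 hS' with rfl | hS'F
      · exfalso
        rcases Finset.mem_insert.1 hdkS' with h | h
        · exact hDE h
        · exact (Finset.mem_erase.1 h).1 rfl
      · obtain ⟨hS'g, hES', hcardS'P⟩ := Finset.mem_filter.1 hS'F
        have hsub : S' ∩ P ⊆ S.erase (d k') := by
          intro x hx
          obtain ⟨hxS', hxP⟩ := Finset.mem_inter.1 hx
          rcases Finset.mem_insert.1 hxP with rfl | h
          · exact absurd hxS' hES'
          · exact h
        have heq : S' ∩ P = S.erase (d k') :=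
          Finset.eq_of_subset_of_card_le hsub (by rw [hcardS'P, hcardSe])
        have hSsub : S ⊆ S' := by
          intro x hxS
          by_cases hxD : x = d k'
          · subst hxD; exact hdkS'
          · have hxe : x ∈ S.erase (d k') := Finset.mem_erase.2 ⟨hxD, hxS⟩
            rw [← heq] at hxe
            exact (Finset.mem_inter.1 hxe).1
        exact (Finset.eq_of_subset_of_card_le hSsub
          (le_of_eq (by rw [(mem_groupG.1 hS'g).1, hS]))).symm
    · exact hcached S' hS' k hkJ hkk
  have hfin := decode_one d u r t k' j J (insert P F) _ hcT hrepr S k'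
    (Finset.mem_insert_of_mem hSF) hk'J hDS hIF hknown
  rwa [hJ, Finset.erase_insert hk'V] at hfin

lemma lemA (d : Fin K → Fin N) (u : ℕ → Fin K) (r t : ℕ) (k' : Fin K)
    (hLd : ∀ i ∈ Finset.Icc 1 (numDistinct d), ∀ i' ∈ Finset.Icc 1 (numDistinct d),
      i ≠ i' → d (u i) ≠ d (u i'))
    (f : ℕ) (hfND : f ≤ numDistinct d) (hfd : d (u f) = d k')
    (j : ℕ) (hj1 : 1 ≤ j) (hjf : j ≤ f)
    (V₁ : Finset (Fin K)) (hV₁ : V₁.card = t) (hk'V : k' ∉ V₁)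
    (hprev : ∀ i, 1 ≤ i → i ≤ j - 1 → u i ∉ V₁)
    (S : Finset (Fin N)) (hS : S.card = r) (hDS : d k' ∈ S)
    (i : ℕ) (hi1 : 1 ≤ i) (hij : i ≤ j - 1) (hiS : d (u i) ∈ S)
    (himin : ∀ i', 1 ≤ i' → i' < i → d (u i') ∉ S)
    (Known : ∀ S' V', S'.card = r → d k' ∈ S' → V'.card = t →
      (V' ∩ (Finset.Icc 1 (j - 1)).image u).Nonempty →
      subBlk N K S' V' ∈ directDec d u r t k' j) :
    subBlk N K S V₁ ∈ directDec d u r t k' j := by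
  classical
  have hr1 : 1 ≤ r := hS ▸ Finset.card_pos.2 ⟨_, hDS⟩
  have hyD : d (u i) ≠ d k' := by
    have h := hLd i (Finset.mem_Icc.2 ⟨hi1, by omega⟩) f
      (Finset.mem_Icc.2 ⟨by omega, hfND⟩) (by omega)
    rw [hfd] at h; exact h
  have huiV : u i ∉ V₁ := hprev i hi1 hij
  set J := insert (u i) V₁ with hJ
  have hJcard : J.card = t + 1 := by rw [hJ, Finset.card_insert_of_notMem huiV, hV₁]
  have huiJ : u i ∈ J := Finset.mem_insert_self _ _
  have hyim : d (u i) ∈ J.image d := Finset.mem_image.2 ⟨u i, huiJ, rfl⟩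
  set B := S \ J.image d with hB
  have hSLD1 : S ∩ leaderDems d u i ⊆ {d (u i)} := by
    intro x hx
    obtain ⟨hxS, hxL⟩ := Finset.mem_inter.1 hx
    obtain ⟨i'', hi'', hxe⟩ := Finset.mem_image.1 hxL
    rw [Finset.mem_Icc] at hi''
    rcases Nat.lt_or_ge i'' i with h | h
    · exact absurd (by rwa [hxe]) (himin i'' hi''.1 h)
    · have hii : i'' = i := by omega
      subst hii
      exact Finset.mem_singleton.2 hxe.symm
  have hSgrp : S ∈ groupG d u r i J B :=
    mem_groupG.2 ⟨hS, ⟨d (u i), Finset.mem_inter.2 ⟨hiS, hyim⟩⟩,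
      le_trans (Finset.card_le_card hSLD1) (by simp), rfl⟩
  have hnotJ : ∀ i' ∈ Finset.Icc 1 (i - 1), u i' ∉ J := by
    intro i' hi'
    rw [Finset.mem_Icc] at hi'
    rw [hJ, Finset.mem_insert]
    push_neg
    refine ⟨fun h => ?_, hprev i' hi'.1 (by omega)⟩
    exact hLd i' (Finset.mem_Icc.2 ⟨hi'.1, by omega⟩) i (Finset.mem_Icc.2 ⟨hi1, by omega⟩)
      (by omega) (by rw [h])
  have hcT : comb d u r i J B S ∈ transmitted d u r t j :=
    ⟨i, Finset.mem_Icc.2 ⟨hi1, by omega⟩, J, hJcard, huiJ, hnotJ, B, S, hSgrp, hiS, rfl⟩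
  set F := (groupG d u r i J B).filter
    (fun S' => d (u i) ∉ S' ∧ (S' ∩ S).card = r - 1) with hF
  have hrepr : comb d u r i J B S = ∑ S' ∈ insert S F, blkTerm d J S' := comb_repr hiS
  have hcardSe : (S.erase (d (u i))).card = r - 1 := by
    rw [Finset.card_erase_of_mem hiS, hS]
  have hDall : ∀ S' ∈ insert S F, d k' ∈ S' := by
    intro S' hS'
    rcases Finset.mem_insert.1 hS' with rfl | hS'F
    · exact hDS
    · obtain ⟨hS'g, hyS', hcardS'⟩ := Finset.mem_filter.1 hS'F
      have hsub : S' ∩ S ⊆ S.erase (d (u i)) := by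
        intro x hx
        obtain ⟨hxS', hxS⟩ := Finset.mem_inter.1 hx
        exact Finset.mem_erase.2 ⟨fun h => hyS' (h ▸ hxS'), hxS⟩
      have heq : S' ∩ S = S.erase (d (u i)) :=
        Finset.eq_of_subset_of_card_le hsub (by rw [hcardS', hcardSe])
      have hmem : d k' ∈ S.erase (d (u i)) :=
        Finset.mem_erase.2 ⟨fun h => hyD h.symm, hDS⟩
      rw [← heq] at hmem
      exact (Finset.mem_inter.1 hmem).1
  have hblcard : ∀ S' ∈ insert S F, S'.card = r := by
    intro S' hS'
    rcases Finset.mem_insert.1 hS' with rfl | hS'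
    · exact hS
    · exact (mem_groupG.1 (Finset.mem_filter.1 hS').1).1
  have hIF : interfFree (d k') (directDec d u r t k' j) (comb d u r i J B S) :=
    interfFree_of_repr k' _ hrepr (fun S' hS' k _ _ => Or.inl (hDall S' hS'))
  have hknown : ∀ S' ∈ insert S F, ∀ k ∈ J, d k ∈ S' → ¬(S' = S ∧ k = u i) →
      subBlk N K S' (J.erase k) ∈ directDec d u r t k' j := by
    intro S' hS' k hkJ hdkS' hne
    by_cases hkui : k = u i
    · exfalso
      rw [hkui] at hdkS'
      apply hne
      refine ⟨?_, hkui⟩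
      rcases Finset.mem_insert.1 hS' with rfl | hS'F
      · rfl
      · exact absurd hdkS' (Finset.mem_filter.1 hS'F).2.1
    · have hkV : k ∈ V₁ := by
        rcases Finset.mem_insert.1 hkJ with h | h
        · exact absurd h hkui
        · exact h
      refine Known S' (J.erase k) (hblcard S' hS') (hDall S' hS') ?_ ?_
      · rw [Finset.card_erase_of_mem hkJ, hJcard]
        omega
      · refine ⟨u i, Finset.mem_inter.2 ⟨Finset.mem_erase.2 ⟨fun h => hkui h.symm, huiJ⟩, ?_⟩⟩
        exact Finset.mem_image.2 ⟨i, Finset.mem_Icc.2 ⟨hi1, hij⟩, rfl⟩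
  have hfin := decode_one d u r t k' j J (insert S F) _ hcT hrepr S (u i)
    (Finset.mem_insert_self _ _) huiJ hiS hIF hknown
  rwa [hJ, Finset.erase_insert huiV] at hfin

end Cases
section Main

variable {N K : ℕ}

lemma mainlem (d : Fin K → Fin N) (u : ℕ → Fin K) (r t : ℕ) (k' : Fin K)
    (hLd : ∀ i ∈ Finset.Icc 1 (numDistinct d), ∀ i' ∈ Finset.Icc 1 (numDistinct d),
      i ≠ i' → d (u i) ≠ d (u i'))
    (f : ℕ) (hfND : f ≤ numDistinct d) (hfd : d (u f) = d k') :
    ∀ j, 1 ≤ j → j ≤ f → ∀ S₁ V₁, S₁.card = r → d k' ∈ S₁ → V₁.card = t →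
      (V₁ ∩ (Finset.Icc 1 j).image u).Nonempty →
      subBlk N K S₁ V₁ ∈ directDec d u r t k' j := by
  intro j
  induction j using Nat.strong_induction_on with
  | _ j IH =>
  intro hj1 hjf S₁ V₁ hS₁ hDS₁ hV₁ hV₁u
  classical
  by_cases hk'V : k' ∈ V₁
  · exact cached_mem d u r t k' j hS₁ hV₁ hk'V
  by_cases hpe : ∃ i, 1 ≤ i ∧ i ≤ j - 1 ∧ u i ∈ V₁
  · obtain ⟨i0, h1, h2, h3⟩ := hpe
    refine directDec_mono d u r t k' (Nat.sub_le j 1) ?_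
    refine IH (j - 1) (by omega) (by omega) (by omega) S₁ V₁ hS₁ hDS₁ hV₁ ?_
    exact ⟨u i0, Finset.mem_inter.2
      ⟨h3, Finset.mem_image.2 ⟨i0, Finset.mem_Icc.2 ⟨h1, h2⟩, rfl⟩⟩⟩
  push_neg at hpe
  have hprev : ∀ i, 1 ≤ i → i ≤ j - 1 → u i ∉ V₁ := hpe
  have hujV : u j ∈ V₁ := by
    obtain ⟨x, hx⟩ := hV₁u
    obtain ⟨hxV, hxim⟩ := Finset.mem_inter.1 hx
    obtain ⟨i, hi, rfl⟩ := Finset.mem_image.1 hxim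
    rw [Finset.mem_Icc] at hi
    rcases Nat.lt_or_ge i j with h | h
    · exact absurd hxV (hprev i hi.1 (by omega))
    · have hij : i = j := by omega
      subst hij; exact hxV
  have Known : ∀ S' V', S'.card = r → d k' ∈ S' → V'.card = t →
      (V' ∩ (Finset.Icc 1 (j - 1)).image u).Nonempty →
      subBlk N K S' V' ∈ directDec d u r t k' j := by
    intro S' V' h1 h2 h3 h4
    obtain ⟨x, hx⟩ := h4
    obtain ⟨hxV, hxim⟩ := Finset.mem_inter.1 hx
    obtain ⟨i, hi, rfl⟩ := Finset.mem_image.1 hxim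
    rw [Finset.mem_Icc] at hi
    refine directDec_mono d u r t k' (Nat.sub_le j 1) ?_
    refine IH (j - 1) (by omega) (by omega) (by omega) S' V' h1 h2 h3 ?_
    exact ⟨u i, Finset.mem_inter.2 ⟨hxV, Finset.mem_image.2 ⟨i, Finset.mem_Icc.2 hi, rfl⟩⟩⟩
  -- decoding of any demanded block containing an earlier leader demand (Lemma A wrapper)
  have decA : ∀ S' : Finset (Fin N), S'.card = r → d k' ∈ S' →
      (∃ i, 1 ≤ i ∧ i ≤ j - 1 ∧ d (u i) ∈ S') →
      subBlk N K S' V₁ ∈ directDec d u r t k' j := by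
    intro S' h1 h2 hA
    set Q := (Finset.Icc 1 (j - 1)).filter (fun i => d (u i) ∈ S') with hQ
    have hQne : Q.Nonempty := by
      obtain ⟨i, hi1, hi2, hi3⟩ := hA
      exact ⟨i, Finset.mem_filter.2 ⟨Finset.mem_Icc.2 ⟨hi1, hi2⟩, hi3⟩⟩
    have hi0Q := Q.min'_mem hQne
    obtain ⟨hi0I, hi0S⟩ := Finset.mem_filter.1 hi0Q
    rw [Finset.mem_Icc] at hi0I
    refine lemA d u r t k' hLd f hfND hfd j hj1 hjf V₁ hV₁ hk'V hprev S' h1 h2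
      (Q.min' hQne) hi0I.1 hi0I.2 hi0S (fun i' hi'1 hi'2 hi'S => ?_) Known
    have hi'Q : i' ∈ Q := Finset.mem_filter.2 ⟨Finset.mem_Icc.2 ⟨hi'1, by omega⟩, hi'S⟩
    exact absurd (Finset.min'_le Q i' hi'Q) (by omega)
  -- decoding of any demanded block avoiding the step-j leader demand
  have decAB : ∀ S' : Finset (Fin N), S'.card = r → d k' ∈ S' → d (u j) ∉ S' →
      subBlk N K S' V₁ ∈ directDec d u r t k' j := by
    intro S' h1 h2 h3
    by_cases hA : ∃ i, 1 ≤ i ∧ i ≤ j - 1 ∧ d (u i) ∈ S'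
    · exact decA S' h1 h2 hA
    · push_neg at hA
      refine lemB d u r t k' hLd f hfND hfd j hj1 hjf V₁ hV₁ hujV hk'V hprev S' h1 h2 ?_
      intro i hib1 hib2
      rcases Nat.lt_or_ge i j with h | h
      · exact hA i hib1 (by omega)
      · have hij : i = j := by omega
        subst hij; exact h3
  by_cases hA₁ : ∃ i, 1 ≤ i ∧ i ≤ j - 1 ∧ d (u i) ∈ S₁
  · exact decA S₁ hS₁ hDS₁ hA₁
  by_cases hE : d (u j) ∉ S₁
  · exact decAB S₁ hS₁ hDS₁ hE
  push_neg at hA₁ hE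
  have hnoprev : ∀ i, 1 ≤ i → i ≤ j - 1 → d (u i) ∉ S₁ := hA₁
  -- Case C : d (u j) ∈ S₁, no earlier leader demand in S₁; pilot S₁ at step j
  have hr1 : 1 ≤ r := hS₁ ▸ Finset.card_pos.2 ⟨_, hDS₁⟩
  set J := insert k' V₁ with hJ
  have hJcard : J.card = t + 1 := by rw [hJ, Finset.card_insert_of_notMem hk'V, hV₁]
  have hk'J : k' ∈ J := Finset.mem_insert_self _ _
  have hujJ : u j ∈ J := Finset.mem_insert_of_mem hujV
  have hDim : d k' ∈ J.image d := Finset.mem_image.2 ⟨k', hk'J, rfl⟩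
  set B := S₁ \ J.image d with hB
  have hS₁LD : S₁ ∩ leaderDems d u j ⊆ {d (u j)} := by
    intro x hx
    obtain ⟨hxS, hxL⟩ := Finset.mem_inter.1 hx
    obtain ⟨i, hi, hxe⟩ := Finset.mem_image.1 hxL
    rw [Finset.mem_Icc] at hi
    rcases Nat.lt_or_ge i j with h | h
    · exact absurd (by rwa [hxe]) (hnoprev i hi.1 (by omega))
    · have hij : i = j := by omega
      subst hij
      exact Finset.mem_singleton.2 hxe.symm
  have hS₁grp : S₁ ∈ groupG d u r j J B :=
    mem_groupG.2 ⟨hS₁, ⟨d k', Finset.mem_inter.2 ⟨hDS₁, hDim⟩⟩,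
      le_trans (Finset.card_le_card hS₁LD) (by simp), rfl⟩
  have hnotJ : ∀ i ∈ Finset.Icc 1 (j - 1), u i ∉ J := by
    intro i hi
    rw [Finset.mem_Icc] at hi
    rw [hJ, Finset.mem_insert]
    push_neg
    refine ⟨fun h => ?_, hprev i hi.1 hi.2⟩
    exact hLd i (Finset.mem_Icc.2 ⟨hi.1, by omega⟩) f (Finset.mem_Icc.2 ⟨by omega, hfND⟩)
      (by omega) (by rw [h, hfd])
  have hcT : comb d u r j J B S₁ ∈ transmitted d u r t j :=
    ⟨j, Finset.mem_Icc.2 ⟨hj1, le_rfl⟩, J, hJcard, hujJ, hnotJ, B, S₁, hS₁grp, hE, rfl⟩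
  set F := (groupG d u r j J B).filter
    (fun S' => d (u j) ∉ S' ∧ (S' ∩ S₁).card = r - 1) with hF
  have hrepr : comb d u r j J B S₁ = ∑ S' ∈ insert S₁ F, blkTerm d J S' := comb_repr hE
  have hblcard : ∀ S' ∈ insert S₁ F, S'.card = r := by
    intro S' hS'
    rcases Finset.mem_insert.1 hS' with rfl | hS'
    · exact hS₁
    · exact (mem_groupG.1 (Finset.mem_filter.1 hS').1).1
  have hcached : ∀ S' ∈ insert S₁ F, ∀ k ∈ J, k ≠ k' →
      subBlk N K S' (J.erase k) ∈ directDec d u r t k' j := by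
    intro S' hS' k hkJ hkk
    refine cached_mem d u r t k' j (hblcard S' hS') ?_ ?_
    · rw [Finset.card_erase_of_mem hkJ, hJcard]
      omega
    · exact Finset.mem_erase.2 ⟨fun h => hkk h.symm, hk'J⟩
  have hIF : interfFree (d k') (directDec d u r t k' j) (comb d u r j J B S₁) := by
    refine interfFree_of_repr k' _ hrepr ?_
    intro S' hS' k hkJ hdkS'
    by_cases hkk : k = k'
    · rw [← hkk]; exact Or.inl hdkS'
    · exact Or.inr (hcached S' hS' k hkJ hkk)
  have hknown : ∀ S' ∈ insert S₁ F, ∀ k ∈ J, d k ∈ S' → ¬(S' = S₁ ∧ k = k') →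
      subBlk N K S' (J.erase k) ∈ directDec d u r t k' j := by
    intro S' hS' k hkJ hdkS' hne
    by_cases hkk : k = k'
    · rw [hkk] at hdkS'
      have hS'F : S' ∈ F := by
        rcases Finset.mem_insert.1 hS' with rfl | h
        · exact absurd ⟨rfl, hkk⟩ hne
        · exact h
      obtain ⟨hS'g, hES', _⟩ := Finset.mem_filter.1 hS'F
      have hdec := decAB S' (mem_groupG.1 hS'g).1 hdkS' hES'
      rw [hkk, hJ, Finset.erase_insert hk'V]
      exact hdec
    · exact hcached S' hS' k hkJ hkk
  have hfin := decode_one d u r t k' j J (insert S₁ F) _ hcT hrepr S₁ k'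
    (Finset.mem_insert_self _ _) hk'J hDS₁ hIF hknown
  rwa [hJ, Finset.erase_insert hk'V] at hfin

end Main
theorem statement9 (N K r t : ℕ) (hN : 1 ≤ N) (hK : 1 ≤ K) (hr : 1 ≤ r) (hrN : r ≤ N)
    (htK : t ≤ K)
    (d : Fin K → Fin N) (u : ℕ → Fin K)
    (hLdistinct : ∀ i ∈ Finset.Icc 1 (numDistinct d), ∀ i' ∈ Finset.Icc 1 (numDistinct d),
      i ≠ i' → d (u i) ≠ d (u i'))
    (hLcover : ∀ k : Fin K, ∃ i ∈ Finset.Icc 1 (numDistinct d), d (u i) = d k)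
    -- a user `k'` whose demanded file is the one demanded by leader `u_{g(d_{k'})}`,
    -- where `g(d_{k'}) = f`
    (k' : Fin K) (f : ℕ) (hf : f ∈ Finset.Icc 1 (numDistinct d)) (hfd : d (u f) = d k')
    (j : ℕ) (hj : j ∈ Finset.Icc 1 (min (N - r + 1) (min (K - t) f))) :
    -- at the end of step `j`, user `k'` directly decodes every sub-block `W_{S₁,V₁}`
    -- with `d_{k'} ∈ S₁` and `V₁ ∩ {u_1,…,u_j} ≠ ∅`
    ∀ (S₁ : Finset (Fin N)) (V₁ : Finset (Fin K)), S₁.card = r → d k' ∈ S₁ →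
      V₁.card = t → (V₁ ∩ (Finset.Icc 1 j).image u).Nonempty →
      subBlk N K S₁ V₁ ∈ directDec d u r t k' j := by
  rw [Finset.mem_Icc] at hj hf
  intro S₁ V₁ h1 h2 h3 h4
  exact mainlem d u r t k' hLdistinct f hf.2 hfd j hj.1
    (le_trans hj.2 (le_trans (min_le_right _ _) (min_le_right _ _))) S₁ V₁ h1 h2 h3 h4
end
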